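/- Let p > 0, q > 0 and α, β ∈ ℝ with β < α − q/p, and for ε > 0 set E(ε) = (q/p) · (1 − e^{(α−β)p/ε}) / (e^{q/ε} − 1) (the derivative at the right boundary of the exact solution of the hypersingular problem). Then E(ε) < 0 for all sufficiently small ε > 0 and ε · ln(−E(ε)) tends to (α − β)p − q as ε → 0⁺; in particular |E(ε)| grows like e^{((α−β)p−q)/ε}, i.e. a hypersingular boundary layer forms at x = 1. -/

import Mathlib

/-!
Writing `A = (α - β) p > q`, the quantity `-E(ε)` factors as `e^{(A - q)/ε} g(ε)` with
`g(ε) = (q/p) (1 - e^{-A/ε}) / (1 - e^{-q/ε}) → q/p > 0`. Hence `-E(ε) > 0` eventually, and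
`ε ln(-E(ε)) = (A - q) + ε ln g(ε)`, where the last term tends to `0 · ln(q/p) = 0`.
-/

open Filter Topology Real

lemma neg_mul_one_sub_exp_div_exp_sub_one (k x y : ℝ) :
    -(k * (1 - exp x) / (exp y - 1)) = exp (x - y) * (k * (1 - exp (-x)) / (1 - exp (-y))) := by
  rw [exp_neg, exp_neg, exp_sub]
  rcases eq_or_ne (exp y) 1 with hy | hy
  · simp [hy]
  · have hy' : exp y - 1 ≠ 0 := sub_ne_zero.mpr hy
    field_simp
    ring

lemma tendsto_exp_neg_div_nhdsGT_zero {c : ℝ} (hc : 0 < c) :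
    Tendsto (fun ε : ℝ => exp (-(c / ε))) (𝓝[>] 0) (𝓝 0) := by
  have hdiv : Tendsto (fun ε : ℝ => c / ε) (𝓝[>] 0) atTop := by
    simpa only [div_eq_mul_inv] using tendsto_inv_nhdsGT_zero.const_mul_atTop hc
  exact tendsto_exp_atBot.comp (tendsto_neg_atBot_iff.mpr hdiv)

lemma tendsto_mul_log_exp_div_mul {g : ℝ → ℝ} {c l : ℝ} (hl : l ≠ 0)
    (hg : Tendsto g (𝓝[>] 0) (𝓝 l)) :
    Tendsto (fun ε : ℝ => ε * log (exp (c / ε) * g ε)) (𝓝[>] 0) (𝓝 c) := by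
  have hlog : Tendsto (fun ε : ℝ => c + ε * log (g ε)) (𝓝[>] 0) (𝓝 (c + 0 * log l)) :=
    tendsto_const_nhds.add
      ((tendsto_id.mono_left nhdsWithin_le_nhds).mul ((continuousAt_log hl).tendsto.comp hg))
  rw [zero_mul, add_zero] at hlog
  refine hlog.congr' ?_
  filter_upwards [self_mem_nhdsWithin, hg.eventually_ne hl] with ε (hε : 0 < ε) hgε
  rw [log_mul (exp_ne_zero _) hgε, log_exp, mul_add, mul_div_cancel₀ _ hε.ne']

/-- for β < α − q/p the right-boundary derivative
E(ε) = (q/p)(1 − e^{(α−β)p/ε})/(e^{q/ε} − 1) of the exact solution is negative for all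
sufficiently small ε > 0 and satisfies ε · ln(−E(ε)) → (α − β)p − q as ε → 0⁺,
i.e. a hypersingular boundary layer forms at x = 1. -/
theorem stmt_6 (p q α β : ℝ) (hp : 0 < p) (hq : 0 < q) (hβα : β < α - q / p) :
    (∀ᶠ ε : ℝ in nhdsWithin 0 (Set.Ioi 0),
      q / p * (1 - Real.exp ((α - β) * p / ε)) / (Real.exp (q / ε) - 1) < 0) ∧
    Tendsto (fun ε : ℝ => ε * Real.log
        (-(q / p * (1 - Real.exp ((α - β) * p / ε)) / (Real.exp (q / ε) - 1))))
      (nhdsWithin 0 (Set.Ioi 0)) (nhds ((α - β) * p - q)) := by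
  set A := (α - β) * p
  have hqA : q < A := by
    rw [lt_sub_iff_add_lt, ← lt_sub_iff_add_lt', div_lt_iff₀ hp] at hβα
    exact hβα
  set g := fun ε : ℝ => q / p * (1 - exp (-(A / ε))) / (1 - exp (-(q / ε)))
  have hg : Tendsto g (𝓝[>] 0) (𝓝 (q / p)) := by
    have h : Tendsto g (𝓝[>] 0) (𝓝 (q / p * (1 - 0) / (1 - 0))) :=
      (tendsto_const_nhds.mul
        (tendsto_const_nhds.sub (tendsto_exp_neg_div_nhdsGT_zero (hq.trans hqA)))).div
        (tendsto_const_nhds.sub (tendsto_exp_neg_div_nhdsGT_zero hq)) (by norm_num)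
    simpa only [sub_zero, mul_one, div_one] using h
  have hE (ε : ℝ) : -(q / p * (1 - exp (A / ε)) / (exp (q / ε) - 1))
      = exp ((A - q) / ε) * g ε := by
    rw [sub_div]
    exact neg_mul_one_sub_exp_div_exp_sub_one _ _ _
  constructor
  · filter_upwards [hg.eventually (lt_mem_nhds (by positivity))] with ε hgε
    have hneg_pos : 0 < exp ((A - q) / ε) * g ε := mul_pos (exp_pos _) hgε
    rw [← hE] at hneg_pos
    linarith
  · simp only [hE]
    exact tendsto_mul_log_exp_div_mul (by positivity) hg
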